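/- arXiv:1104.4251 — 3 statements merged into one kernel-verified Lean document; each statement's English description precedes it below -/
import Mathlib

section
/- If Π is a row-stochastic matrix whose Cesaro limit P = lim_{k→∞} (1/k) ∑_{j=0}^{k-1} Π^j exists, then for any vector χ, lim_{θ→0+} θ[I - (1-θ)Π]^{-1} χ = P χ (the Abel limit of the discounted sum equals the Cesaro limit applied to χ). -/
/-!
Writing `S k = ∑ j < k, a j`, summation by parts gives
`(1 - x) ∑ x^k a_k = ∑ (1 - x)^2 (k + 1) x^k • (S (k + 1) / (k + 1))`,
so the Abel mean is an average of the Cesàro means with nonnegative weights of total mass one,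
each of which tends to `0` as `x → 1⁻`; by Toeplitz's argument it has the same limit.
For a matrix `A` the Cesàro hypothesis forces `‖A^k‖ = O(k)`, so the Neumann series
`∑ (1 - θ)^k A^k` converges to `(1 - (1 - θ) A)⁻¹` for `0 < θ < 1`.
-/

open Matrix Filter Topology Finset

def abelWeight (x : ℝ) (k : ℕ) : ℝ := (1 - x) ^ 2 * ((k + 1) * x ^ k)

lemma hasSum_succ_mul_pow {x : ℝ} (hx : |x| < 1) :
    HasSum (fun k : ℕ => ((k : ℝ) + 1) * x ^ k) ((1 - x) ^ 2)⁻¹ := by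
  simpa using hasSum_choose_mul_geometric_of_norm_lt_one 1 (r := x) hx

lemma hasSum_abelWeight {x : ℝ} (hx0 : 0 ≤ x) (hx1 : x < 1) : HasSum (abelWeight x) 1 := by
  have hx : (1 - x) ^ 2 ≠ 0 := by positivity
  rw [← mul_inv_cancel₀ hx]
  exact (hasSum_succ_mul_pow (abs_lt.2 ⟨by linarith, hx1⟩)).mul_left ((1 - x) ^ 2)

lemma tendsto_abelWeight (k : ℕ) : Tendsto (abelWeight · k) (𝓝 1) (𝓝 0) := by
  have : Continuous (abelWeight · k) := by unfold abelWeight; fun_prop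
  simpa [abelWeight] using this.tendsto 1

section

variable {E : Type*} [NormedAddCommGroup E] [NormedSpace ℝ E]

lemma Summable.smul_of_tendsto [CompleteSpace E] {w : ℕ → ℝ} {c : ℕ → E} {L : E}
    (hw : Summable w) (hc : Tendsto c atTop (𝓝 L)) : Summable fun k => w k • c k := by
  obtain ⟨C, hC⟩ := isBounded_iff_forall_norm_le.1 (Metric.isBounded_range_of_tendsto c hc)
  refine Summable.of_norm_bounded (hw.norm.mul_right C) fun k => ?_
  rw [norm_smul]
  exact mul_le_mul_of_nonneg_left (hC _ ⟨k, rfl⟩) (norm_nonneg _)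

theorem tendsto_tsum_smul_of_tendsto_zero [CompleteSpace E] {ι : Type*} {l : Filter ι}
    {w : ι → ℕ → ℝ} {d : ℕ → E}
    (hw0 : ∀ᶠ i in l, ∀ k, 0 ≤ w i k) (hw1 : ∀ᶠ i in l, HasSum (w i) 1)
    (hwk : ∀ k, Tendsto (w · k) l (𝓝 0)) (hd : Tendsto d atTop (𝓝 0)) :
    Tendsto (fun i => ∑' k, w i k • d k) l (𝓝 0) := by
  rw [NormedAddGroup.tendsto_nhds_zero]
  intro ε hε
  obtain ⟨N, hN⟩ :=
    eventually_atTop.1 (NormedAddGroup.tendsto_nhds_zero.1 hd (ε / 2) (half_pos hε))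
  have hhead : Tendsto (fun i => ∑ k ∈ range N, w i k • d k) l (𝓝 0) := by
    simpa using tendsto_finsetSum (range N) fun k _ => (hwk k).smul_const (d k)
  filter_upwards [hw0, hw1, NormedAddGroup.tendsto_nhds_zero.1 hhead (ε / 2) (half_pos hε)]
    with i hi0 hi1 hihead
  have htail_weight : ∑' k, w i (k + N) ≤ 1 :=
    hi1.tsum_eq ▸ tsum_comp_le_tsum_of_inj hi1.summable hi0 (add_left_injective N)
  have htail : ‖∑' k, w i (k + N) • d (k + N)‖ ≤ (∑' k, w i (k + N)) * (ε / 2) := by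
    refine tsum_of_norm_bounded
      (((summable_nat_add_iff N).2 hi1.summable).hasSum.mul_right (ε / 2)) fun k => ?_
    rw [norm_smul, Real.norm_of_nonneg (hi0 _)]
    exact mul_le_mul_of_nonneg_left (hN _ (by omega)).le (hi0 _)
  rw [← (hi1.summable.smul_of_tendsto hd).sum_add_tsum_nat_add N]
  calc _ ≤ ‖∑ k ∈ range N, w i k • d k‖ + ‖∑' k, w i (k + N) • d (k + N)‖ := norm_add_le _ _
    _ < ε := by nlinarith

theorem tendsto_tsum_smul_of_tendsto [CompleteSpace E] {ι : Type*} {l : Filter ι}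
    {w : ι → ℕ → ℝ} {c : ℕ → E} {L : E}
    (hw0 : ∀ᶠ i in l, ∀ k, 0 ≤ w i k) (hw1 : ∀ᶠ i in l, HasSum (w i) 1)
    (hwk : ∀ k, Tendsto (w · k) l (𝓝 0)) (hc : Tendsto c atTop (𝓝 L)) :
    Tendsto (fun i => ∑' k, w i k • c k) l (𝓝 L) := by
  rw [← tendsto_sub_nhds_zero_iff]
  refine (tendsto_tsum_smul_of_tendsto_zero hw0 hw1 hwk
    (tendsto_sub_nhds_zero_iff.2 hc)).congr' ?_
  filter_upwards [hw1] with i hi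
  simp only [smul_sub]
  rw [(hi.summable.smul_of_tendsto hc).tsum_sub (hi.summable.smul_const L),
    hi.summable.tsum_smul_const, hi.tsum_eq, one_smul]

lemma hasSum_pow_smul_of_summable_pow_smul_sum_range {x : ℝ} {a : ℕ → E}
    (hS : Summable fun k => x ^ k • ∑ j ∈ range (k + 1), a j) :
    HasSum (fun k => x ^ k • a k) ((1 - x) • ∑' k, x ^ k • ∑ j ∈ range (k + 1), a j) := by
  have hshift : HasSum (fun k => x ^ k • ∑ j ∈ range k, a j)
      (x • ∑' k, x ^ k • ∑ j ∈ range (k + 1), a j) := by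
    simpa using (hasSum_nat_add_iff (f := fun k => x ^ k • ∑ j ∈ range k, a j) 1).1
      (by simpa [pow_succ', mul_smul] using hS.hasSum.const_smul x)
  rw [sub_smul, one_smul]
  convert hS.hasSum.sub hshift using 2 with k
  rw [sum_range_succ, smul_add]
  abel

lemma Filter.Tendsto.cesaro_succ {a : ℕ → E} {L : E}
    (h : Tendsto (fun k : ℕ => (k : ℝ)⁻¹ • ∑ j ∈ range k, a j) atTop (𝓝 L)) :
    Tendsto (fun k : ℕ => ((k : ℝ) + 1)⁻¹ • ∑ j ∈ range (k + 1), a j) atTop (𝓝 L) := by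
  simpa using (tendsto_add_atTop_iff_nat 1).2 h

lemma succ_mul_smul_inv_succ_smul (k : ℕ) (y : ℝ) (v : E) :
    (((k : ℝ) + 1) * y) • (((k : ℝ) + 1)⁻¹ • v) = y • v := by
  rw [mul_comm, mul_smul, smul_inv_smul₀ (by positivity)]

variable [CompleteSpace E] {a : ℕ → E} {L : E}

lemma summable_pow_smul_sum_range_of_tendsto_cesaro
    (h : Tendsto (fun k : ℕ => (k : ℝ)⁻¹ • ∑ j ∈ range k, a j) atTop (𝓝 L))
    {x : ℝ} (hx : |x| < 1) : Summable fun k => x ^ k • ∑ j ∈ range (k + 1), a j := by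
  simpa only [succ_mul_smul_inv_succ_smul] using
    (hasSum_succ_mul_pow hx).summable.smul_of_tendsto h.cesaro_succ

lemma summable_pow_smul_of_tendsto_cesaro
    (h : Tendsto (fun k : ℕ => (k : ℝ)⁻¹ • ∑ j ∈ range k, a j) atTop (𝓝 L))
    {x : ℝ} (hx : |x| < 1) : Summable fun k => x ^ k • a k :=
  (hasSum_pow_smul_of_summable_pow_smul_sum_range
    (summable_pow_smul_sum_range_of_tendsto_cesaro h hx)).summable

theorem tendsto_abel_of_tendsto_cesaro
    (h : Tendsto (fun k : ℕ => (k : ℝ)⁻¹ • ∑ j ∈ range k, a j) atTop (𝓝 L)) :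
    Tendsto (fun x : ℝ => (1 - x) • ∑' k, x ^ k • a k) (𝓝[<] 1) (𝓝 L) := by
  have hx : ∀ᶠ x in 𝓝[<] (1 : ℝ), x ∈ Set.Ioo 0 1 := Ioo_mem_nhdsLT one_pos
  have hw0 : ∀ᶠ x in 𝓝[<] (1 : ℝ), ∀ k, 0 ≤ abelWeight x k := hx.mono fun x hx k => by
    have := hx.1
    unfold abelWeight
    positivity
  refine (tendsto_tsum_smul_of_tendsto hw0 (hx.mono fun x hx => hasSum_abelWeight hx.1.le hx.2)
    (fun k => (tendsto_abelWeight k).mono_left nhdsWithin_le_nhds) h.cesaro_succ).congr' ?_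
  filter_upwards [hx] with x ⟨hx0, hx1⟩
  have hS := summable_pow_smul_sum_range_of_tendsto_cesaro h (abs_lt.2 ⟨by linarith, hx1⟩)
  rw [(hasSum_pow_smul_of_summable_pow_smul_sum_range hS).tsum_eq, smul_smul, ← sq,
    ← tsum_const_smul'']
  simp only [abelWeight, mul_smul ((1 - x) ^ 2), succ_mul_smul_inv_succ_smul]

end

theorem Matrix.inv_one_sub_eq_tsum_pow {m R : Type*} [Fintype m] [DecidableEq m] [CommRing R]
    [TopologicalSpace R] [IsTopologicalRing R] [T2Space R] {A : Matrix m m R}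
    (hA : Summable (A ^ ·)) : (1 - A)⁻¹ = ∑' k, A ^ k :=
  Matrix.inv_eq_right_inv hA.one_sub_mul_tsum_pow

theorem stmt_2_general {n : ℕ} (A P : Matrix (Fin n) (Fin n) ℝ)
    (hP : Tendsto (fun k : ℕ => (k : ℝ)⁻¹ • ∑ j ∈ Finset.range k, A ^ j) atTop (𝓝 P))
    (χ : Fin n → ℝ) :
    Tendsto (fun θ : ℝ => θ • (((1 : Matrix (Fin n) (Fin n) ℝ) - (1 - θ) • A)⁻¹).mulVec χ)
      (𝓝[>] 0) (𝓝 (P.mulVec χ)) := by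
  -- Any norm inducing the entrywise topology will do.
  let : NormedAddCommGroup (Matrix (Fin n) (Fin n) ℝ) := Matrix.normedAddCommGroup
  let : NormedSpace ℝ (Matrix (Fin n) (Fin n) ℝ) := Matrix.normedSpace
  have hreflect : Tendsto (fun θ : ℝ => 1 - θ) (𝓝[>] 0) (𝓝[<] 1) := by
    refine tendsto_nhdsWithin_iff.2
      ⟨?_, eventually_nhdsWithin_of_forall fun θ hθ => by simpa using hθ⟩
    exact ((continuous_const.sub continuous_id).tendsto' 0 1 (by simp)).mono_left
      nhdsWithin_le_nhds
  have hresolvent : Tendsto (fun θ : ℝ => θ • ((1 : Matrix (Fin n) (Fin n) ℝ) - (1 - θ) • A)⁻¹)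
      (𝓝[>] 0) (𝓝 P) := by
    refine ((tendsto_abel_of_tendsto_cesaro hP).comp hreflect).congr' ?_
    filter_upwards [Ioo_mem_nhdsGT one_pos] with θ ⟨hθ0, hθ1⟩
    have hA := summable_pow_smul_of_tendsto_cesaro hP (x := 1 - θ)
      (abs_lt.2 ⟨by linarith, by linarith⟩)
    simp only [Function.comp, sub_sub_cancel, ← smul_pow] at hA ⊢
    exact congrArg (θ • ·) (Matrix.inv_one_sub_eq_tsum_pow hA).symm
  simpa only [Function.comp_def, id, Matrix.smul_mulVec] using
    ((continuous_id.matrix_mulVec (continuous_const (y := χ))).tendsto P).comp hresolvent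

/-- Abel limit of the discounted resolvent applied to χ equals the Cesaro limit applied to χ. -/
theorem stmt_2 {n : ℕ} (A P : Matrix (Fin n) (Fin n) ℝ)
    (hnn : ∀ i j, 0 ≤ A i j) (hrow : ∀ i, ∑ j, A i j = 1)
    (hP : Tendsto (fun k : ℕ => (k : ℝ)⁻¹ • ∑ j ∈ Finset.range k, A ^ j) atTop (𝓝 P))
    (χ : Fin n → ℝ) :
    Tendsto (fun θ : ℝ => θ • (((1 : Matrix (Fin n) (Fin n) ℝ) - (1 - θ) • A)⁻¹).mulVec χ)
      (𝓝[>] 0) (𝓝 (P.mulVec χ)) :=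
  stmt_2_general A P hP χ
end

section
/- In a strongly absorbing finite directed graph (one satisfying: there is a nonempty set A of absorbing vertices, every vertex has a path to some vertex of A, and for distinct u,v, if (u,v) is an edge then there is no directed path of any positive length from v back to u), every exact power G^d of the graph is also strongly absorbing. -/
/-!
Walks of length `n` in the `d`-th power are exactly walks of length `n * d` in `G`. Absorbing
vertices and reachability of `A` therefore transfer (padding a walk into `A` with self-loops to a
multiple of `d`). For the no-return condition, the key fact is that under it a closed walk
through `u` never leaves `u`: its first step away from `u` would be an edge followed by a walk
back. An edge `u → v` of `G^d` followed by a walk `v → u` in `G^d` is such a closed walk.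
-/

/-- There is a directed walk of length exactly `d` from `u` to `v`. -/
def WalkLen {V : Type*} (G : V → V → Prop) (d : ℕ) (u v : V) : Prop :=
  ∃ f : ℕ → V, f 0 = u ∧ f d = v ∧ ∀ i < d, G (f i) (f (i + 1))

/-- `v` is absorbing: its only outgoing edge is a self-loop. -/
def IsAbsorbing {V : Type*} (G : V → V → Prop) (v : V) : Prop :=
  G v v ∧ ∀ w, G v w → w = v

/-- The graph `G` is strongly absorbing with absorbing set `A`. -/
def StronglyAbsorbing {V : Type*} [Fintype V] (G : V → V → Prop) (A : Set V) : Prop :=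
  A.Nonempty ∧ A ≠ Set.univ ∧ (∀ a ∈ A, IsAbsorbing G a) ∧
  (∀ v, ∃ a ∈ A, ∃ k : ℕ, WalkLen G k v a) ∧
  (∀ u v, u ≠ v → G u v → ∀ d : ℕ, 0 < d → ¬ WalkLen G d v u)

section WalkLen

variable {V : Type*} {G : V → V → Prop}

theorem walkLen_zero_iff {u v : V} : WalkLen G 0 u v ↔ u = v :=
  ⟨fun ⟨f, h0, h1, _⟩ => h0 ▸ h1, fun h => ⟨fun _ => u, rfl, h, by simp⟩⟩

theorem walkLen_succ_iff {n : ℕ} {u w : V} :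
    WalkLen G (n + 1) u w ↔ ∃ x, G u x ∧ WalkLen G n x w := by
  constructor
  · rintro ⟨f, h0, hn, hf⟩
    exact ⟨f 1, h0 ▸ hf 0 n.succ_pos, fun i => f (i + 1), rfl, hn,
      fun i hi => hf (i + 1) (by omega)⟩
  · rintro ⟨x, hux, g, hg0, hgn, hg⟩
    refine ⟨fun | 0 => u | j + 1 => g j, rfl, hgn, ?_⟩
    rintro (_ | j) hj
    · simpa [hg0] using hux
    · exact hg j (by omega)

theorem walkLen_add_iff {m n : ℕ} {u v : V} :
    WalkLen G (m + n) u v ↔ ∃ w, WalkLen G m u w ∧ WalkLen G n w v := by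
  induction m generalizing u with
  | zero => simp [walkLen_zero_iff]
  | succ m ih =>
    rw [Nat.add_right_comm, walkLen_succ_iff]
    simp only [ih, walkLen_succ_iff]
    aesop

theorem WalkLen.append {m n : ℕ} {u w v : V} (h₁ : WalkLen G m u w) (h₂ : WalkLen G n w v) :
    WalkLen G (m + n) u v :=
  walkLen_add_iff.2 ⟨w, h₁, h₂⟩

theorem walkLen_of_loop {a : V} (ha : G a a) (n : ℕ) : WalkLen G n a a :=
  ⟨fun _ => a, rfl, rfl, fun _ _ => ha⟩

theorem walkLen_mul_iff {d n : ℕ} {u v : V} :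
    WalkLen (WalkLen G d) n u v ↔ WalkLen G (n * d) u v := by
  induction n generalizing u with
  | zero => simp [walkLen_zero_iff]
  | succ n ih => simp only [walkLen_succ_iff, ih, Nat.succ_mul, Nat.add_comm _ d, walkLen_add_iff]

theorem IsAbsorbing.eq_of_walkLen {a w : V} {n : ℕ} (ha : IsAbsorbing G a)
    (h : WalkLen G n a w) : w = a := by
  induction n with
  | zero => exact (walkLen_zero_iff.1 h).symm
  | succ n ih =>
    obtain ⟨x, hax, hx⟩ := walkLen_succ_iff.1 h
    exact ih (ha.2 x hax ▸ hx)

theorem IsAbsorbing.walkLen_of_le {a v : V} {k n : ℕ} (ha : IsAbsorbing G a)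
    (h : WalkLen G k v a) (hkn : k ≤ n) : WalkLen G n v a :=
  Nat.add_sub_cancel' hkn ▸ h.append (walkLen_of_loop ha.1 (n - k))

theorem eq_of_walkLen_of_walkLen
    (hG : ∀ u v, u ≠ v → G u v → ∀ d : ℕ, 0 < d → ¬ WalkLen G d v u)
    {m n : ℕ} {u w : V} (h₁ : WalkLen G m u w) (h₂ : WalkLen G n w u) : w = u := by
  induction m generalizing u with
  | zero => exact (walkLen_zero_iff.1 h₁).symm
  | succ m ih =>
    obtain ⟨x, hux, hx⟩ := walkLen_succ_iff.1 h₁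
    obtain rfl : x = u := by
      by_contra hxu
      have hpos : 0 < m + n := by
        by_contra h0
        obtain ⟨rfl, rfl⟩ : m = 0 ∧ n = 0 := by omega
        exact hxu ((walkLen_zero_iff.1 hx).trans (walkLen_zero_iff.1 h₂))
      exact hG u x (Ne.symm hxu) hux _ hpos (hx.append h₂)
    exact ih hx h₂

end WalkLen

/-- Every exact power of a strongly absorbing finite directed graph is strongly absorbing. -/
theorem stmt_16 {V : Type*} [Fintype V] (G : V → V → Prop) (A : Set V)
    (hSA : StronglyAbsorbing G A) :
    ∀ d : ℕ, 0 < d → StronglyAbsorbing (fun u v => WalkLen G d u v) A := by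
  intro d hd
  obtain ⟨hne, hA, habs, hreach, hG⟩ := hSA
  refine ⟨hne, hA, fun a ha => ?_, fun v => ?_, fun u v huv hedge e _ hvu => ?_⟩
  · exact ⟨walkLen_of_loop (habs a ha).1 d, fun w hw => (habs a ha).eq_of_walkLen hw⟩
  · obtain ⟨a, ha, k, hk⟩ := hreach v
    exact ⟨a, ha, k,
      walkLen_mul_iff.2 ((habs a ha).walkLen_of_le hk (Nat.le_mul_of_pos_right k hd))⟩
  · exact huv (eq_of_walkLen_of_walkLen hG hedge (walkLen_mul_iff.1 hvu)).symm
end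

section
/- Spectral bound for strongly absorbing chains: let Π be the transition matrix of a finite Markov chain with a single absorbing state, whose underlying directed graph (edges = positive transition probabilities) is strongly absorbing, and whose non-unity diagonal entries are all at most b < 1. Then every eigenvalue μ of Π with μ ≠ 1 satisfies |μ| ≤ b. -/
/-!
Order the states by decreasing number of proper descendants (states `k ≠ i` reachable from `i`
by a nonempty walk), breaking ties by index. Along an edge `i → j` with `i ≠ j`, the descendants
of `j` form a proper subset of those of `i`: they are descendants of `i`, and `j` is one of `i`'s
but not one of its own. So the transition matrix is upper triangular in this order, and its eigenvalues are its
diagonal entries. A diagonal entry of a stochastic matrix other than `1` is `< 1`, hence `≤ b`.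
-/

open Matrix

open Finset Polynomial

namespace Matrix

variable {ι K : Type*} [Fintype ι] [DecidableEq ι] [Field K]

theorem IsUpperTriangular.spectrum_eq [LinearOrder ι] {M : Matrix ι ι K}
    (hM : M.IsUpperTriangular) : spectrum K M = Set.range M.diag := by
  ext μ
  simp only [mem_spectrum_iff_isRoot_charpoly, charpoly_of_isUpperTriangular M hM, IsRoot.def,
    eval_prod, eval_sub, eval_X, eval_C, prod_eq_zero_iff, mem_univ, true_and, sub_eq_zero,
    Set.mem_range, diag_apply]
  exact exists_congr fun _ => eq_comm

theorem BlockTriangular.spectrum_eq_of_injective {α : Type*} [LinearOrder α] {M : Matrix ι ι K}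
    {b : ι → α} (hM : M.BlockTriangular b) (hb : b.Injective) :
    spectrum K M = Set.range M.diag :=
  letI := LinearOrder.lift' b hb
  IsUpperTriangular.spectrum_eq hM

end Matrix

namespace WalkLen

variable {V : Type*} {G : V → V → Prop} {u v w : V}

theorem cons {d : ℕ} (huv : G u v) (hvw : WalkLen G d v w) : WalkLen G (d + 1) u w := by
  obtain ⟨f, hf0, hfd, hstep⟩ := hvw
  refine ⟨fun m => Nat.casesOn m u f, rfl, hfd, fun m hm => ?_⟩
  cases m with
  | zero => simpa [hf0] using huv
  | succ m => exact hstep m (by omega)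

theorem single (huv : G u v) : WalkLen G 1 u v :=
  cons huv ⟨fun _ => v, rfl, rfl, fun _ h => absurd h (Nat.not_lt_zero _)⟩

end WalkLen

section Descendants

variable {V : Type*} (G : V → V → Prop)

def properDescendants (i : V) : Set V :=
  {k | k ≠ i ∧ ∃ d, 0 < d ∧ WalkLen G d i k}

variable {G}

theorem ncard_properDescendants_lt [Finite V]
    (hnoret : ∀ i j, i ≠ j → G i j → ∀ d : ℕ, 0 < d → ¬ WalkLen G d j i)
    {i j : V} (hij : i ≠ j) (hG : G i j) :
    (properDescendants G j).ncard < (properDescendants G i).ncard := by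
  refine Set.ncard_lt_ncard ⟨fun k ⟨hkj, d, hd, hjk⟩ => ⟨?_, d + 1, d.succ_pos, hjk.cons hG⟩,
    fun hsub => (hsub ⟨hij.symm, 1, one_pos, .single hG⟩).1 rfl⟩ (Set.toFinite _)
  rintro rfl
  exact hnoret k j hij hG d hd hjk

variable (G)

noncomputable def descendantRank (i : V) : Lex (ℕᵒᵈ × V) :=
  toLex (OrderDual.toDual (properDescendants G i).ncard, i)

theorem descendantRank_injective : (descendantRank G).Injective :=
  fun _ _ h => congrArg (fun x => (ofLex x).2) h

variable {G}

theorem Matrix.blockTriangular_descendantRank [Finite V] [LinearOrder V] {R : Type*} [Zero R]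
    {M : Matrix V V R}
    (hnoret : ∀ i j, i ≠ j → G i j → ∀ d : ℕ, 0 < d → ¬ WalkLen G d j i)
    (hM : ∀ i j, i ≠ j → M i j ≠ 0 → G i j) :
    M.BlockTriangular (descendantRank G) := by
  intro i j hji
  by_contra hne
  have hij : i ≠ j := by rintro rfl; exact lt_irrefl _ hji
  have hlt : descendantRank G i < descendantRank G j :=
    Prod.Lex.lt_iff.mpr (Or.inl (ncard_properDescendants_lt hnoret hij (hM i j hij hne)))
  exact lt_asymm hji hlt

end Descendants

theorem stmt_18_general {n : ℕ} (A : Matrix (Fin (n + 1)) (Fin (n + 1)) ℝ)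
    (hnn : ∀ i j, 0 ≤ A i j) (hrow : ∀ i, ∑ j, A i j = 1)
    (hnoret : ∀ i j, i ≠ j → 0 < A i j →
      ∀ d : ℕ, 0 < d → ¬ WalkLen (fun p q => 0 < A p q) d j i)
    (b : ℝ)
    (hdiag : ∀ i, A i i < 1 → A i i ≤ b) :
    ∀ μ ∈ spectrum ℂ (A.map Complex.ofReal), μ ≠ 1 → ‖μ‖ ≤ b := by
  intro μ hμ hμ1
  have hsupp : ∀ i j, i ≠ j → A.map Complex.ofReal i j ≠ 0 → 0 < A i j := fun i j _ h =>
    (hnn i j).lt_of_ne' (by simpa using h)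
  rw [(Matrix.blockTriangular_descendantRank hnoret hsupp).spectrum_eq_of_injective
    (descendantRank_injective _)] at hμ
  obtain ⟨i, rfl⟩ := hμ
  have hle : A i i ≤ 1 := hrow i ▸ single_le_sum (fun j _ => hnn i j) (mem_univ i)
  have hlt : A i i < 1 := hle.lt_of_ne fun h => hμ1 (by simp [h])
  simpa [abs_of_nonneg (hnn i i)] using hdiag i hlt

/-- Spectral bound for strongly absorbing chains: if the single absorbing state is state n,
the graph of positive transition probabilities is strongly absorbing, and every non-unity
diagonal entry is at most b < 1, then every non-unity eigenvalue μ of Π satisfies ‖μ‖ ≤ b. -/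
theorem stmt_18 {n : ℕ} (A : Matrix (Fin (n + 1)) (Fin (n + 1)) ℝ)
    (hnn : ∀ i j, 0 ≤ A i j) (hrow : ∀ i, ∑ j, A i j = 1)
    (habs : A (Fin.last n) (Fin.last n) = 1)
    (habs' : ∀ j, j ≠ Fin.last n → A (Fin.last n) j = 0)
    (hreach : ∀ i, ∃ k : ℕ, WalkLen (fun p q => 0 < A p q) k i (Fin.last n))
    (hnoret : ∀ i j, i ≠ j → 0 < A i j →
      ∀ d : ℕ, 0 < d → ¬ WalkLen (fun p q => 0 < A p q) d j i)
    (b : ℝ) (hb0 : 0 ≤ b) (hb1 : b < 1)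
    (hdiag : ∀ i, A i i < 1 → A i i ≤ b) :
    ∀ μ ∈ spectrum ℂ (A.map Complex.ofReal), μ ≠ 1 → ‖μ‖ ≤ b :=
  stmt_18_general A hnn hrow hnoret b hdiag
end
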